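/- arXiv:1708.03025 — 6 statements merged into one kernel-verified Lean document; each statement's English description precedes it below -/
import Mathlib

section
/- The quadratic equation (v_u/v_w) r^2 + (v_u/v_w - 1) r + (1 - R0)/R0 = 0 in r has a real solution only if R0 ≥ 4 v_u v_w, where v_u = 1 - v_w. -/
theorem quadratic_real_root_requires_R0
    (v_w R0 r : ℝ) (hv0 : 0 < v_w) (hv1 : v_w < 1) (hR0 : 0 < R0)
    (hroot : ((1 - v_w) / v_w) * r ^ 2 + ((1 - v_w) / v_w - 1) * r + (1 - R0) / R0 = 0) :
    R0 ≥ 4 * (1 - v_w) * v_w := by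
  have hv : v_w ≠ 0 := ne_of_gt hv0
  have hR : R0 ≠ 0 := ne_of_gt hR0
  have h : (1 - v_w) * R0 * r ^ 2 + (1 - 2 * v_w) * R0 * r + (1 - R0) * v_w = 0 := by
    have := hroot
    field_simp at this
    nlinarith [this]
  nlinarith [sq_nonneg (2 * (1 - v_w) * r + (1 - 2 * v_w)), sq_nonneg r, mul_pos hv0 hR0, sq_nonneg (1 - 2*v_w)]
end

section
/- Suppose 1/2 < v_w < 1, v_u = 1 - v_w, and 4 v_u v_w < R0 < 1. Then both roots r± = (1/(2 v_u)) (2 v_w - 1 ± sqrt(1 - 4 v_u v_w / R0)) of the equation (v_u/v_w) r^2 + (v_u/v_w - 1) r + (1 - R0)/R0 = 0 are real and strictly positive, and r+ > r-. -/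
/-! With `v_u = 1 - v_w`, the discriminant of the quadratic (scaled by `v_w²`) is
`(v_w - v_u)² - 4 v_u v_w (1 - R0)/R0 = 1 - 4 v_u v_w / R0`, which is positive because
`4 v_u v_w < R0`, and smaller than `(2 v_w - 1)² = 1 - 4 v_u v_w` because `R0 < 1`. Hence its
square root lies strictly between `0` and `2 v_w - 1`, so both roots `(2 v_w - 1 ± √·)/(2 v_u)`
are positive and distinct. -/

lemma endemic_quadratic_eq_zero {v R s : ℝ} (hv₀ : v ≠ 0) (hv₁ : 1 - v ≠ 0) (hR : R ≠ 0)
    (hs : s ^ 2 = 1 - 4 * (1 - v) * v / R) :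
    ((1 - v) / v) * ((1 / (2 * (1 - v))) * (2 * v - 1 + s)) ^ 2 +
      ((1 - v) / v - 1) * ((1 / (2 * (1 - v))) * (2 * v - 1 + s)) + (1 - R) / R = 0 := by
  have hsR : s ^ 2 * R = R - 4 * (1 - v) * v := by
    rw [hs]; field_simp
  field_simp
  linear_combination hsR

lemma endemic_discr_pos {v R : ℝ} (hv₀ : 0 < v) (hv₁ : v < 1) (hR : 4 * (1 - v) * v < R) :
    0 < 1 - 4 * (1 - v) * v / R := by
  have hR₀ : 0 < R := lt_trans (by have := sub_pos.2 hv₁; positivity) hR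
  rw [sub_pos, div_lt_one hR₀]
  exact hR

lemma sqrt_endemic_discr_lt {v R : ℝ} (hv₀ : 1 / 2 < v) (hv₁ : v < 1) (hR₀ : 0 < R)
    (hR₁ : R < 1) : √(1 - 4 * (1 - v) * v / R) < 2 * v - 1 := by
  have huv : 0 < 4 * (1 - v) * v := by nlinarith
  have hdiv : 4 * (1 - v) * v < 4 * (1 - v) * v / R := by
    rw [lt_div_iff₀ hR₀]; nlinarith
  rw [Real.sqrt_lt' (by linarith), show (2 * v - 1) ^ 2 = 1 - 4 * (1 - v) * v by ring]
  linarith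

theorem two_positive_endemic_roots
    (v_w R0 : ℝ) (hv1 : 1 / 2 < v_w) (hv2 : v_w < 1)
    (hR1 : 4 * (1 - v_w) * v_w < R0) (hR2 : R0 < 1) :
    let v_u := 1 - v_w
    let rp := (1 / (2 * v_u)) * (2 * v_w - 1 + Real.sqrt (1 - 4 * v_u * v_w / R0))
    let rm := (1 / (2 * v_u)) * (2 * v_w - 1 - Real.sqrt (1 - 4 * v_u * v_w / R0))
    ((v_u / v_w) * rp ^ 2 + (v_u / v_w - 1) * rp + (1 - R0) / R0 = 0) ∧
    ((v_u / v_w) * rm ^ 2 + (v_u / v_w - 1) * rm + (1 - R0) / R0 = 0) ∧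
    0 < rm ∧ 0 < rp ∧ rm < rp := by
  intro v_u rp rm
  have hv_w : 0 < v_w := by linarith
  have hv_u : 0 < v_u := sub_pos.2 hv2
  have hdiscr := endemic_discr_pos hv_w hv2 hR1
  have hR0 : 0 < R0 := lt_trans (by positivity) hR1
  set s := √(1 - 4 * v_u * v_w / R0)
  have hs_sq : s ^ 2 = 1 - 4 * v_u * v_w / R0 := Real.sq_sqrt hdiscr.le
  have hs_pos : 0 < s := Real.sqrt_pos.2 hdiscr
  have hs_lt : s < 2 * v_w - 1 := sqrt_endemic_discr_lt hv1 hv2 hR0 hR2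
  have hk : 0 < 1 / (2 * v_u) := by positivity
  refine ⟨endemic_quadratic_eq_zero hv_w.ne' hv_u.ne' hR0.ne' hs_sq, ?_,
    mul_pos hk (by linarith), mul_pos hk (by linarith), mul_lt_mul_of_pos_left (by linarith) hk⟩
  simpa only [← sub_eq_add_neg] using
    endemic_quadratic_eq_zero hv_w.ne' hv_u.ne' hR0.ne' (s := -s) (by rw [neg_sq, hs_sq])
end

section
/- If R0 = 4 v_u v_w with 1/2 < v_w < 1 and v_u = 1 - v_w, then the quadratic (v_u/v_w) r^2 + (v_u/v_w - 1) r + (1 - R0)/R0 = 0 has a unique (double) root r = (2 v_w - 1)/(2 v_u), which is strictly positive. -/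
/-!
Since `v_u + v_w = 1`, we have `1 - 4 v_u v_w = (v_w - v_u)²`, so at `R0 = 4 v_u v_w` the
discriminant `(v_u / v_w - 1)² - 4 (v_u / v_w) (1 - R0) / R0` vanishes and the quadratic has the
single root `-(v_u / v_w - 1) / (2 v_u / v_w) = (v_w - v_u) / (2 v_u)`, positive as `v_w > v_u > 0`.
-/

section Bifurcation

variable {K : Type*} [Field K] {v_u v_w : K}

theorem discrim_eq_zero_at_bifurcation [NeZero (2 : K)] (hsum : v_u + v_w = 1) (hu : v_u ≠ 0)
    (hw : v_w ≠ 0) :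
    discrim (v_u / v_w) (v_u / v_w - 1) ((1 - 4 * v_u * v_w) / (4 * v_u * v_w)) = 0 := by
  have h4 : (4 : K) ≠ 0 := by
    simpa [show (4 : K) = 2 * 2 by norm_num] using (NeZero.ne (2 : K))
  obtain rfl : v_u = 1 - v_w := eq_sub_of_add_eq hsum
  rw [discrim]
  field_simp
  ring

theorem bifurcation_root_eq (hsum : v_u + v_w = 1) (hw : v_w ≠ 0) :
    -(v_u / v_w - 1) / (2 * (v_u / v_w)) = (2 * v_w - 1) / (2 * v_u) := by
  rw [div_sub_one hw, mul_div_assoc', ← neg_div, div_div_div_cancel_right₀ hw]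
  congr 1
  linear_combination -hsum

end Bifurcation

theorem double_root_at_bifurcation
    (v_w R0 : ℝ) (hv1 : 1 / 2 < v_w) (hv2 : v_w < 1)
    (hR0 : R0 = 4 * (1 - v_w) * v_w) :
    let v_u := 1 - v_w
    (∀ r : ℝ, (v_u / v_w) * r ^ 2 + (v_u / v_w - 1) * r + (1 - R0) / R0 = 0 ↔
        r = (2 * v_w - 1) / (2 * v_u)) ∧
    0 < (2 * v_w - 1) / (2 * v_u) := by
  intro v_u
  have hsum : v_u + v_w = 1 := sub_add_cancel 1 v_w
  have hu : 0 < v_u := sub_pos.mpr hv2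
  have hw : 0 < v_w := by linarith
  refine ⟨fun r => ?_, div_pos (by linarith) (by positivity)⟩
  rw [hR0, sq, quadratic_eq_zero_iff_of_discrim_eq_zero (by positivity)
    (discrim_eq_zero_at_bifurcation hsum hu.ne' hw.ne'), bifurcation_root_eq hsum hw.ne']
end

section
/- The point EE^0 = (A_u^0, F_u^0, F_{pu}^0, M_u^0) with A_u^0 = K_a(1 - 1/G_0u), F_u^0 = b_f ψ A_u^0 / (μ_fu + σ), F_{pu}^0 = b_f ψ σ A_u^0 / ((μ_fu + σ) μ_fu), M_u^0 = b_m ψ A_u^0 / μ_mu, together with zero infected compartments, is an equilibrium of the Wolbachia ODE system: the right-hand sides of all eight equations vanish at this point. -/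
/-!
The three female and male equations are linear, so they vanish at the stated multiples of `A_u`.
In particular `F_pu = c A_u` with `φ_u c = G_0u (μ_a + ψ)` by the definition of `G_0u`. The aquatic
equation then reads `(μ_a + ψ) A_u (G_0u (1 - A_u / K_a) - 1) = 0`, and `A_u = K_a (1 - 1 / G_0u)`
is exactly the nonzero root, where the logistic factor `1 - A_u / K_a` equals `1 / G_0u`.
-/

section LogisticRecruitment

variable {φ c r K G A : ℝ}

theorem one_sub_div_eq_one_div_of_eq_mul_one_sub (hK : K ≠ 0) (hA : A = K * (1 - 1 / G)) :
    1 - A / K = 1 / G := by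
  rw [hA, mul_div_cancel_left₀ _ hK]
  ring

theorem logistic_recruitment_sub_loss_eq_zero (hK : K ≠ 0) (hG : G ≠ 0) (hGc : φ * c = G * r)
    (hA : A = K * (1 - 1 / G)) : φ * (1 - A / K) * (c * A) - r * A = 0 := by
  rw [one_sub_div_eq_one_div_of_eq_mul_one_sub hK hA]
  calc φ * (1 / G) * (c * A) - r * A = φ * c / G * A - r * A := by ring
    _ = 0 := by rw [hGc, mul_div_cancel_left₀ _ hG, sub_self]

end LogisticRecruitment

theorem offspring_number_mul_aquatic_loss {b_f ψ σ μ_a μ_fu φ_u : ℝ} (hμa : μ_a + ψ ≠ 0) :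
    b_f * (ψ / (μ_a + ψ)) * (σ / (σ + μ_fu)) * (φ_u / μ_fu) * (μ_a + ψ) =
      φ_u * (b_f * ψ * σ / ((μ_fu + σ) * μ_fu)) := by
  rw [add_comm μ_fu σ]
  field_simp

theorem disease_free_equilibrium_general
    (K_a b_f b_m ψ σ μ_a μ_fu μ_mu φ_u : ℝ)
    (hK : 0 < K_a) (hψ : 0 < ψ) (hσ : 0 < σ)
    (hμa : 0 < μ_a) (hμfu : 0 < μ_fu) (hμmu : 0 < μ_mu)
    (G_0u : ℝ)
    (hG : G_0u = b_f * (ψ / (μ_a + ψ)) * (σ / (σ + μ_fu)) * (φ_u / μ_fu))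
    (hG1 : 1 < G_0u)
    (A_u F_u F_pu M_u : ℝ)
    (hA : A_u = K_a * (1 - 1 / G_0u))
    (hF : F_u = b_f * ψ * A_u / (μ_fu + σ))
    (hFp : F_pu = b_f * ψ * σ * A_u / ((μ_fu + σ) * μ_fu))
    (hM : M_u = b_m * ψ * A_u / μ_mu) :
    φ_u * (1 - A_u / K_a) * F_pu - (μ_a + ψ) * A_u = 0 ∧
    b_f * ψ * A_u - (σ + μ_fu) * F_u = 0 ∧
    σ * F_u - μ_fu * F_pu = 0 ∧
    b_m * ψ * A_u - μ_mu * M_u = 0 := by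
  have hFp_of_A : F_pu = b_f * ψ * σ / ((μ_fu + σ) * μ_fu) * A_u := by rw [hFp]; ring
  have hFp_of_F : F_pu = σ * F_u / μ_fu := by rw [hFp, hF, mul_div_assoc', div_div]; ring
  refine ⟨?_, ?_, ?_, ?_⟩
  · rw [hFp_of_A]
    refine logistic_recruitment_sub_loss_eq_zero hK.ne' (by linarith) ?_ hA
    rw [hG, offspring_number_mul_aquatic_loss (by positivity)]
  · rw [hF, add_comm μ_fu σ, mul_div_cancel₀ _ (by positivity), sub_self]
  · rw [hFp_of_F, mul_div_cancel₀ _ hμfu.ne', sub_self]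
  · rw [hM, mul_div_cancel₀ _ hμmu.ne', sub_self]

theorem disease_free_equilibrium
    (K_a b_f b_m ψ σ μ_a μ_fu μ_mu φ_u : ℝ)
    (hK : 0 < K_a) (hbf : 0 < b_f) (hbm : 0 < b_m) (hψ : 0 < ψ) (hσ : 0 < σ)
    (hμa : 0 < μ_a) (hμfu : 0 < μ_fu) (hμmu : 0 < μ_mu) (hφu : 0 < φ_u)
    (G_0u : ℝ)
    (hG : G_0u = b_f * (ψ / (μ_a + ψ)) * (σ / (σ + μ_fu)) * (φ_u / μ_fu))
    (hG1 : 1 < G_0u)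
    (A_u F_u F_pu M_u : ℝ)
    (hA : A_u = K_a * (1 - 1 / G_0u))
    (hF : F_u = b_f * ψ * A_u / (μ_fu + σ))
    (hFp : F_pu = b_f * ψ * σ * A_u / ((μ_fu + σ) * μ_fu))
    (hM : M_u = b_m * ψ * A_u / μ_mu) :
    φ_u * (1 - A_u / K_a) * F_pu - (μ_a + ψ) * A_u = 0 ∧
    b_f * ψ * A_u - (σ + μ_fu) * F_u = 0 ∧
    σ * F_u - μ_fu * F_pu = 0 ∧
    b_m * ψ * A_u - μ_mu * M_u = 0 :=
  disease_free_equilibrium_general K_a b_f b_m ψ σ μ_a μ_fu μ_mu φ_u hK hψ hσ hμa hμfu hμmu G_0u hG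
    hG1 A_u F_u F_pu M_u hA hF hFp hM
end

section
/- Let A1 be the 2×2 matrix [[-G_0u(μ_a+ψ), 0], [b_f ψ, -σ-μ_fu]] and consider the 3×3 Metzler matrix A_s1 = [[-G_0u(μ_a+ψ), 0, φ_u/G_0u], [b_f ψ, -σ-μ_fu, 0], [0, σ, -μ_fu]]. Then the Schur complement of A1 in A_s1, namely D1 - C1 A1^{-1} B1 with B1 = (φ_u/G_0u, 0)^T, C1 = (0, σ), D1 = (-μ_fu), equals -μ_fu (1 - 1/G_0u), which is negative when G_0u > 1. -/
/-!
Since `A1` is lower triangular and `B1`, `C1` each have a single nonzero entry, the Schur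
complement only sees the `(1, 0)` entry `-b_f ψ / det A1` of `A1⁻¹`. The definition of `G_0u`
says precisely that `b_f ψ σ φ_u = G_0u (μ_a + ψ) (σ + μ_fu) μ_fu`, i.e. `G_0u · det A1 · μ_fu`.
-/

open Matrix

lemma inv_lowerTriangular_fin_two_apply_one_zero {K : Type*} [Field K] (a d e : K) :
    (!![a, 0; d, e])⁻¹ 1 0 = -d / (a * e) := by
  rw [inv_def, adjugate_fin_two_of, det_fin_two_of, Ring.inverse_eq_inv', Matrix.smul_apply]
  simp [div_eq_inv_mul]

/-- No side conditions: when `a * e = 0` both sides are `δ`, by the junk values of `⁻¹` and `/`. -/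
lemma schur_complement_lowerTriangular_fin_two {K : Type*} [Field K] (a b c d e δ : K) :
    (!![δ] - !![0, c] * (!![a, 0; d, e])⁻¹ * !![b; 0] : Matrix (Fin 1) (Fin 1) K) 0 0 =
      δ + b * c * d / (a * e) := by
  simp only [Matrix.sub_apply, Matrix.mul_apply, Fin.sum_univ_two,
    inv_lowerTriangular_fin_two_apply_one_zero]
  simp only [Fin.isValue, of_apply, cons_val', cons_val_fin_one, cons_val_zero, zero_mul,
    cons_val_one, zero_add, mul_zero, add_zero]
  ring

theorem schur_complement_DFE_uninfected_block
    (μ_a ψ b_f σ μ_fu φ_u : ℝ)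
    (hμa : 0 < μ_a) (hψ : 0 < ψ) (hbf : 0 < b_f) (hσ : 0 < σ)
    (hμfu : 0 < μ_fu) (hφu : 0 < φ_u)
    (G_0u : ℝ)
    (hG : G_0u = b_f * (ψ / (μ_a + ψ)) * (σ / (σ + μ_fu)) * (φ_u / μ_fu)) :
    let A1 : Matrix (Fin 2) (Fin 2) ℝ := !![-(G_0u * (μ_a + ψ)), 0; b_f * ψ, -σ - μ_fu]
    let B1 : Matrix (Fin 2) (Fin 1) ℝ := !![φ_u / G_0u; 0]
    let C1 : Matrix (Fin 1) (Fin 2) ℝ := !![0, σ]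
    let D1 : Matrix (Fin 1) (Fin 1) ℝ := !![-μ_fu]
    (D1 - C1 * A1⁻¹ * B1) 0 0 = -μ_fu * (1 - 1 / G_0u) ∧
    (1 < G_0u → (D1 - C1 * A1⁻¹ * B1) 0 0 < 0) := by
  intro A1 B1 C1 D1
  have hG0 : 0 < G_0u := hG ▸ by positivity
  have hG_mul : b_f * ψ * σ * φ_u = G_0u * (μ_a + ψ) * (σ + μ_fu) * μ_fu := by
    rw [hG]
    field_simp
  have hschur : (D1 - C1 * A1⁻¹ * B1) 0 0 = -μ_fu * (1 - 1 / G_0u) := by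
    have hσμ : -σ - μ_fu ≠ 0 := by linarith
    rw [schur_complement_lowerTriangular_fin_two]
    field_simp
    linear_combination -hG_mul
  refine ⟨hschur, fun h1G => ?_⟩
  rw [hschur]
  exact mul_neg_of_neg_of_pos (neg_neg_of_pos hμfu) (sub_pos.2 ((div_lt_one hG0).2 h1G))
end

section
/- Let A2 = [[-(μ_a+ψ), 0], [b_f ψ, -σ-μ_fw]], B2 = (v_w φ_w/G_0u, 0)^T, C2 = (0, σ), D2 = (-μ_fw). Then the Schur complement D2 - C2 A2^{-1} B2 equals -μ_fw (1 - R0), where R0 = G_0w/G_0u; in particular it is negative if and only if R0 < 1. -/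
open Matrix

theorem schur_complement_DFE_infected_block
    (μ_a ψ b_f σ μ_fu μ_fw φ_u φ_w v_w : ℝ)
    (hμa : 0 < μ_a) (hψ : 0 < ψ) (hbf : 0 < b_f) (hσ : 0 < σ)
    (hμfu : 0 < μ_fu) (hμfw : 0 < μ_fw) (hφu : 0 < φ_u) (hφw : 0 < φ_w)
    (hv : 0 < v_w)
    (G_0u G_0w R0 : ℝ)
    (hGu : G_0u = b_f * (ψ / (μ_a + ψ)) * (σ / (σ + μ_fu)) * (φ_u / μ_fu))
    (hGw : G_0w = v_w * b_f * (ψ / (μ_a + ψ)) * (σ / (σ + μ_fw)) * (φ_w / μ_fw))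
    (hR0 : R0 = G_0w / G_0u) :
    let A2 : Matrix (Fin 2) (Fin 2) ℝ := !![-(μ_a + ψ), 0; b_f * ψ, -σ - μ_fw]
    let B2 : Matrix (Fin 2) (Fin 1) ℝ := !![v_w * φ_w / G_0u; 0]
    let C2 : Matrix (Fin 1) (Fin 2) ℝ := !![0, σ]
    let D2 : Matrix (Fin 1) (Fin 1) ℝ := !![-μ_fw]
    (D2 - C2 * A2⁻¹ * B2) 0 0 = -μ_fw * (1 - R0) ∧
    ((D2 - C2 * A2⁻¹ * B2) 0 0 < 0 ↔ R0 < 1) := by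
  intro A2 B2 C2 D2
  have hGu0 : 0 < G_0u := by
    rw [hGu]; positivity
  have hdet : A2.det = (μ_a + ψ) * (σ + μ_fw) := by
    simp [A2, Matrix.det_fin_two_of]; ring
  have hdet0 : A2.det ≠ 0 := by rw [hdet]; positivity
  have hadj : A2.adjugate = !![-σ - μ_fw, 0; -(b_f * ψ), -(μ_a + ψ)] := by
    show (!![-(μ_a + ψ), 0; b_f * ψ, -σ - μ_fw] : Matrix (Fin 2) (Fin 2) ℝ).adjugate = _
    rw [Matrix.adjugate_fin_two]
    norm_num
  have hinv : A2⁻¹ = (A2.det)⁻¹ • !![-σ - μ_fw, 0; -(b_f * ψ), -(μ_a + ψ)] := by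
    rw [Matrix.inv_def, hadj, Ring.inverse_eq_inv']
  have hentry : (D2 - C2 * A2⁻¹ * B2) 0 0 = -μ_fw * (1 - R0) := by
    rw [hinv]
    have haσ : (μ_a + ψ) ≠ 0 := by positivity
    have hσw : (σ + μ_fw) ≠ 0 := by positivity
    simp [D2, C2, B2, Matrix.mul_apply, Fin.sum_univ_succ, hdet]
    rw [hR0, hGw]
    field_simp
    ring
  refine ⟨hentry, ?_⟩
  rw [hentry]
  constructor
  · intro h
    nlinarith
  · intro h
    nlinarith
end
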